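/- Let H be a pseudoexpander with m = |Roots(H)|, let M be a pseudomatching of H, let η = (3/12800)·m^(−4/4.9), and let X_M = Σ_{{t_i,t_j} ∈ M} X_{i,j} on the probability space on SAT(H). Then Pr(X_M < η·|M|) ≤ 0.4^(100·η·|M|). -/

import Mathlib

open scoped Classical

namespace NBPPaper

/-! ### Literals and assignments.
A literal is a pair `(x, b)` of a variable and a polarity (`true` = positive literal).
A set of literals is a `Finset (Var × Bool)`. -/

/-- A set of literals is consistent: no variable occurs both positively and negatively. -/
def Consistent {Var : Type} (S : Finset (Var × Bool)) : Prop :=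
  ∀ x : Var, ¬((x, true) ∈ S ∧ (x, false) ∈ S)

/-- `S` is a set of literals over the variable set `W`. -/
def LitsOver {Var : Type} (W : Finset Var) (S : Finset (Var × Bool)) : Prop :=
  Consistent S ∧ ∀ l ∈ S, l.1 ∈ W

/-- `S` is an assignment of exactly the variables of `W`:
it contains exactly one literal of each variable of `W` and nothing else. -/
def AssignsExactly {Var : Type} (W : Finset Var) (S : Finset (Var × Bool)) : Prop :=
  (∀ l ∈ S, l.1 ∈ W) ∧ ∀ x ∈ W, ∃! b : Bool, (x, b) ∈ S

/-- Satisfaction of a CNF, given as a set of clauses (each clause a set of literals):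
every clause contains a literal of `S`. -/
def SatCNF {V : Type} (φ : Set (Finset (V × Bool))) (S : Finset (V × Bool)) : Prop :=
  ∀ C ∈ φ, ∃ l ∈ C, l ∈ S

/-! ### Nondeterministic branching programs -/

/-- An edge of a nondeterministic branching program over variable type `Var`
with vertex set `Fin n`.  `lab = none` means the edge is unlabelled; the field
`id` allows parallel edges (multigraph). -/
structure NBPEdge (Var : Type) (n : ℕ) where
  src : Fin n
  dst : Fin n
  lab : Option (Var × Bool)
  id : ℕ
deriving DecidableEq

/-- A nondeterministic branching program: a finite DAG (the vertices `Fin n` are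
listed in a topological order, i.e. every edge increases the index) with a single
source (the only vertex with no incoming edge) and a single sink (the only vertex
with no outgoing edge). -/
structure NBP (Var : Type) where
  n : ℕ
  edges : Finset (NBPEdge Var n)
  source : Fin n
  sink : Fin n
  acyc : ∀ e ∈ edges, e.src < e.dst
  source_no_in : ∀ e ∈ edges, e.dst ≠ source
  sink_no_out : ∀ e ∈ edges, e.src ≠ sink
  only_source : ∀ v : Fin n, v ≠ source → ∃ e ∈ edges, e.dst = v
  only_sink : ∀ v : Fin n, v ≠ sink → ∃ e ∈ edges, e.src = v

variable {Var : Type}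

/-- The set of literals labelling the edges of a path (a list of edges). -/
def pathLits [DecidableEq Var] {n : ℕ} (p : List (NBPEdge Var n)) : Finset (Var × Bool) :=
  (p.filterMap NBPEdge.lab).toFinset

/-- The set of variables occurring (as edge labels) on a path. -/
def pathVars [DecidableEq Var] {n : ℕ} (p : List (NBPEdge Var n)) : Finset Var :=
  ((p.filterMap NBPEdge.lab).map Prod.fst).toFinset

/-- The set of vertices visited by a path. -/
def pathVertices {n : ℕ} (p : List (NBPEdge Var n)) : Finset (Fin n) :=
  (p.map NBPEdge.src).toFinset ∪ (p.map NBPEdge.dst).toFinset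

/-- The number of occurrences of the variable `x` as an edge label on the path `p`. -/
def occCount [DecidableEq Var] {n : ℕ} (x : Var) (p : List (NBPEdge Var n)) : ℕ :=
  (p.filterMap NBPEdge.lab).countP (fun l => decide (l.1 = x))

namespace NBP

/-- `p` is a directed path of `Z` from vertex `u` to vertex `v`. -/
def IsPathFrom (Z : NBP Var) (u v : Fin Z.n) (p : List (NBPEdge Var Z.n)) : Prop :=
  p ≠ [] ∧ (∀ e ∈ p, e ∈ Z.edges) ∧ List.Chain' (fun e f => e.dst = f.src) p ∧
    p.head?.map NBPEdge.src = some u ∧ p.getLast?.map NBPEdge.dst = some v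

/-- `p` is a source-sink path of `Z`. -/
def IsSourceSink (Z : NBP Var) (p : List (NBPEdge Var Z.n)) : Prop :=
  Z.IsPathFrom Z.source Z.sink p

/-- A computational path: a source-sink path carrying no two opposite literals. -/
def IsCompPath [DecidableEq Var] (Z : NBP Var) (p : List (NBPEdge Var Z.n)) : Prop :=
  Z.IsSourceSink p ∧ Consistent (pathLits p)

/-- The set `Vars(Z)` of variables whose literals occur on edges of `Z`. -/
def vars [DecidableEq Var] (Z : NBP Var) : Finset Var :=
  Z.edges.biUnion (fun e => (e.lab.map Prod.fst).toFinset)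

/-- `Z` is a (syntactic) read-`d`-times NBP. -/
def ReadTimes [DecidableEq Var] (Z : NBP Var) (d : ℕ) : Prop :=
  ∀ p, Z.IsSourceSink p → ∀ x : Var, occCount x p ≤ d

/-- `Z` is a uniform read-`d`-times NBP: every variable of `Z` occurs exactly `d`
times on every source-sink path. -/
def UniformReadTimes [DecidableEq Var] (Z : NBP Var) (d : ℕ) : Prop :=
  Z.ReadTimes d ∧ ∀ p, Z.IsSourceSink p → ∀ x ∈ Z.vars, occCount x p = d

/-- `Z` computes the Boolean function with variable set `W` whose satisfying
(total) assignments are described by the predicate `F`. -/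
def Computes [DecidableEq Var] (Z : NBP Var) (W : Finset Var)
    (F : Finset (Var × Bool) → Prop) : Prop :=
  Z.vars = W ∧ ∀ S, AssignsExactly W S → (F S ↔ ∃ p, Z.IsCompPath p ∧ pathLits p ⊆ S)

end NBP

/-- `parts` is the partition of the path `p` generated by the vertex set `X`:
`p` is cut into `|X| + 1` consecutive nonempty subpaths whose cut points are
exactly the vertices of `X`. -/
def GeneratesPartition {n : ℕ} (X : Finset (Fin n)) (p : List (NBPEdge Var n))
    (parts : List (List (NBPEdge Var n))) : Prop :=
  p = parts.flatten ∧ parts.length = X.card + 1 ∧ (∀ q ∈ parts, q ≠ []) ∧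
    (parts.dropLast.filterMap (fun q => q.getLast?.map NBPEdge.dst)).toFinset = X

/-- Variables of `Y₁` occur only on parts with even (0-based) index, i.e. odd-numbered
subpaths, and variables of `Y₂` only on parts with odd (0-based) index. -/
def OddEvenSplit [DecidableEq Var] {n : ℕ} (parts : List (List (NBPEdge Var n)))
    (Y₁ Y₂ : Finset Var) : Prop :=
  ∀ k : ℕ, ∀ x ∈ pathVars (parts.getD k []),
    (x ∈ Y₁ → k % 2 = 0) ∧ (x ∈ Y₂ → k % 2 = 1)

/-- The set `X` of vertices of `Z` (containing neither source nor sink) separates the two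
disjoint subsets `Y₁, Y₂` of `Vars(Z)`. -/
def NBP.Separates [DecidableEq Var] (Z : NBP Var) (X : Finset (Fin Z.n))
    (Y₁ Y₂ : Finset Var) : Prop :=
  Disjoint Y₁ Y₂ ∧ Y₁ ⊆ Z.vars ∧ Y₂ ⊆ Z.vars ∧ Z.source ∉ X ∧ Z.sink ∉ X ∧
  ∃ p parts, Z.IsCompPath p ∧ GeneratesPartition X p parts ∧
    (OddEvenSplit parts Y₁ Y₂ ∨ OddEvenSplit parts Y₂ Y₁)

/-! ### Rooted trees -/

/-- A finite rooted tree on (a subset of) the vertex type `V`, given by a parent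
function together with a depth function certifying acyclicity. -/
structure RootedTree (V : Type) [DecidableEq V] where
  verts : Finset V
  root : V
  parent : V → V
  depth : V → ℕ
  root_mem : root ∈ verts
  parent_mem : ∀ v ∈ verts, v ≠ root → parent v ∈ verts
  depth_root : depth root = 0
  depth_parent : ∀ v ∈ verts, v ≠ root → depth v = depth (parent v) + 1

namespace RootedTree

variable {V : Type} [DecidableEq V]

/-- The children of a vertex. -/
def children (T : RootedTree V) (u : V) : Finset V :=
  T.verts.filter (fun v => v ≠ T.root ∧ T.parent v = u)

/-- The leaves of the tree: vertices with no children. -/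
def leaves (T : RootedTree V) : Finset V :=
  T.verts.filter (fun v => T.children v = ∅)

/-- The vertex set of the path from the root to `v` (i.e. `v` and all its ancestors). -/
def pathVerts (T : RootedTree V) (v : V) : Finset V :=
  (Finset.range (T.depth v + 1)).image (fun k => T.parent^[k] v)

/-- The height of the tree: the largest number of vertices on a root-leaf path. -/
def height (T : RootedTree V) : ℕ :=
  (T.verts.sup T.depth) + 1

/-- Every vertex has at most two children. -/
def IsBinary (T : RootedTree V) : Prop :=
  ∀ u ∈ T.verts, (T.children u).card ≤ 2

/-- The tree is extended: none of its leaves has a sibling. -/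
def IsExtended (T : RootedTree V) : Prop :=
  ∀ v ∈ T.verts, v ≠ T.root → T.children v = ∅ → T.children (T.parent v) = {v}

/-- The edge set of the tree (as unordered pairs). -/
def edgeSet (T : RootedTree V) : Finset (Sym2 V) :=
  (T.verts.filter (fun v => v ≠ T.root)).image (fun v => s(v, T.parent v))

end RootedTree

/-! ### Binary-tree-based graphs and pseudoexpanders -/

/-- A binary-tree-based (BTB) graph on the vertex type `V`: an edge-disjoint union of
`m` extended binary rooted trees such that every leaf of one of the trees is a leaf of
exactly two of the trees, any two trees have at most one vertex in common (that vertex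
being a leaf of both), and the roots are pairwise distinct. -/
structure BTB (V : Type) [DecidableEq V] [Fintype V] where
  m : ℕ
  tree : Fin m → RootedTree V
  binary : ∀ i, (tree i).IsBinary
  extended : ∀ i, (tree i).IsExtended
  cover : ∀ v : V, ∃ i, v ∈ (tree i).verts
  edge_disjoint : ∀ i j, i ≠ j → Disjoint ((tree i).edgeSet) ((tree j).edgeSet)
  leaf_two : ∀ i, ∀ v ∈ (tree i).leaves,
    (Finset.univ.filter (fun j => v ∈ (tree j).leaves)).card = 2
  common_le_one : ∀ i j, i ≠ j → ∀ u v,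
    u ∈ (tree i).verts → u ∈ (tree j).verts →
    v ∈ (tree i).verts → v ∈ (tree j).verts → u = v
  common_leaf : ∀ i j, i ≠ j → ∀ v, v ∈ (tree i).verts → v ∈ (tree j).verts →
    v ∈ (tree i).leaves ∧ v ∈ (tree j).leaves
  roots_inj : Function.Injective (fun i => (tree i).root)

namespace BTB

variable {V : Type} [DecidableEq V] [Fintype V]

/-- `ℓ` is the common leaf of the (adjacent) trees `T_i` and `T_j`. -/
def IsCommonLeaf (H : BTB V) (i j : Fin H.m) (ℓ : V) : Prop :=
  i ≠ j ∧ ℓ ∈ (H.tree i).leaves ∧ ℓ ∈ (H.tree j).leaves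

/-- The trees `T_i` and `T_j` are adjacent (share a common leaf); equivalently,
`{t_i, t_j}` is a pseudoedge of `H`. -/
def Adjacent (H : BTB V) (i j : Fin H.m) : Prop :=
  ∃ ℓ, H.IsCommonLeaf i j ℓ

/-- The pseudodegree of the root `t_i`: the number of pseudoedges containing it. -/
noncomputable def pseudodegree (H : BTB V) (i : Fin H.m) : ℕ :=
  (Finset.univ.filter (fun j => H.Adjacent i j)).card

/-- The set of root vertices of `H`. -/
def rootSet (H : BTB V) : Finset V :=
  Finset.univ.image (fun i => (H.tree i).root)

/-- A pseudomatching: a set of pseudoedges (recorded as ordered pairs of root indices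
with `i < j`) no two of which share an end. -/
def IsPseudomatching (H : BTB V) (M : Finset (Fin H.m × Fin H.m)) : Prop :=
  (∀ e ∈ M, e.1 < e.2 ∧ H.Adjacent e.1 e.2) ∧
  ∀ e ∈ M, ∀ f ∈ M, e ≠ f → e.1 ≠ f.1 ∧ e.1 ≠ f.2 ∧ e.2 ≠ f.1 ∧ e.2 ≠ f.2

/-- A pseudomatching between the disjoint sets `U` and `W` of roots (given by their
indices): every pseudoedge of `M` has one end in `U` and the other in `W`. -/
def IsPseudomatchingBetween (H : BTB V) (M : Finset (Fin H.m × Fin H.m))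
    (U W : Finset (Fin H.m)) : Prop :=
  H.IsPseudomatching M ∧ ∀ e ∈ M, (e.1 ∈ U ∧ e.2 ∈ W) ∨ (e.1 ∈ W ∧ e.2 ∈ U)

/-- The set `⋃M` of root vertices matched by the pseudomatching `M`. -/
def matchingRoots (H : BTB V) (M : Finset (Fin H.m × Fin H.m)) : Finset V :=
  M.biUnion (fun e => {(H.tree e.1).root, (H.tree e.2).root})

/-- The vertex set `V(P_{i,j})` of the path connecting the roots `t_i` and `t_j`
through their common leaf `ℓ`. -/
def clauseVerts (H : BTB V) (i j : Fin H.m) (ℓ : V) : Finset V :=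
  (H.tree i).pathVerts ℓ ∪ (H.tree j).pathVerts ℓ

/-- `S` satisfies the monotone CNF `φ_H`. -/
def SatisfiesPhi (H : BTB V) (S : Finset (V × Bool)) : Prop :=
  ∀ i j ℓ, H.IsCommonLeaf i j ℓ → ∃ v ∈ H.clauseVerts i j ℓ, (v, true) ∈ S

/-- `S` falsifies no clause of `φ_H`. -/
def FalsifiesNoClause (H : BTB V) (S : Finset (V × Bool)) : Prop :=
  ∀ i j ℓ, H.IsCommonLeaf i j ℓ → ¬(∀ v ∈ H.clauseVerts i j ℓ, (v, false) ∈ S)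

/-- `H` is a pseudoexpander. -/
def IsPseudoexpander (H : BTB V) : Prop :=
  (∀ i, ((H.tree i).height : ℝ) ≤ Real.logb 2 H.m / 4.9 + 3) ∧
  ∀ U W : Finset (Fin H.m), Disjoint U W →
    (H.m : ℝ) ^ (0.999 : ℝ) ≤ U.card → (H.m : ℝ) ^ (0.999 : ℝ) ≤ W.card →
    ∃ M, H.IsPseudomatchingBetween M U W ∧ (H.m : ℝ) ^ (0.999 : ℝ) / 3 ≤ M.card

/-! #### The probability space on the satisfying assignments of `φ_H` -/

/-- The set `SAT(H)` of satisfying assignments of `φ_H` (total assignments of the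
variables `V(H)` satisfying every clause). -/
noncomputable def SATH (H : BTB V) : Finset (Finset (V × Bool)) :=
  Finset.univ.filter (fun S => AssignsExactly Finset.univ S ∧ H.SatisfiesPhi S)

/-- `Fix(S)`: the set of leaf variables `ℓ_{i,j}` occurring positively in `S` such that
all the other variables of the clause `C_{i,j}` occur negatively in `S`. -/
def Fix (H : BTB V) (S : Finset (V × Bool)) : Set V :=
  {ℓ | ∃ i j, H.IsCommonLeaf i j ℓ ∧ (ℓ, true) ∈ S ∧
      ∀ v ∈ H.clauseVerts i j ℓ, v ≠ ℓ → (v, false) ∈ S}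

/-- The probability weight of `S`: `(1/2) ^ |V(H) \ Fix(S)|`. -/
noncomputable def weight (H : BTB V) (S : Finset (V × Bool)) : ℝ :=
  (1 / 2 : ℝ) ^ (Fintype.card V - (H.Fix S).ncard)

/-- The probability of the event `E` in the probability space on `SAT(H)`. -/
noncomputable def Pr (H : BTB V) (E : Finset (V × Bool) → Prop) : ℝ :=
  ∑ S ∈ H.SATH.filter E, H.weight S

/-- `|S \ Fix(S)|`: the number of literals of `S` that are not fixed. -/
noncomputable def nonFixedCount (H : BTB V) (S : Finset (V × Bool)) : ℕ :=
  (S.filter (fun l => ¬(l.2 = true ∧ l.1 ∈ H.Fix S))).card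

/-- `v` and `w` are siblings (in one of the trees of `H`). -/
def Sibling (H : BTB V) (v w : V) : Prop :=
  ∃ k, v ∈ (H.tree k).verts ∧ w ∈ (H.tree k).verts ∧
    v ≠ (H.tree k).root ∧ w ≠ (H.tree k).root ∧ v ≠ w ∧
    (H.tree k).parent v = (H.tree k).parent w

/-- `S` respects the pseudoedge `{t_i, t_j}`: all non-root variables of `C_{i,j}` occur
negatively in `S` and the siblings of all internal variables of `C_{i,j}` occur
positively in `S`. -/
def Respects (H : BTB V) (i j : Fin H.m) (S : Finset (V × Bool)) : Prop :=
  ∃ ℓ, H.IsCommonLeaf i j ℓ ∧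
    (∀ v ∈ H.clauseVerts i j ℓ,
      v ≠ (H.tree i).root → v ≠ (H.tree j).root → (v, false) ∈ S) ∧
    (∀ v ∈ H.clauseVerts i j ℓ,
      v ≠ (H.tree i).root → v ≠ (H.tree j).root → v ≠ ℓ →
      ∀ w, H.Sibling v w → (w, true) ∈ S)

/-- `S` is `η`-comfortable w.r.t. the pseudomatching `M`: `S` falsifies no clause of
`φ_H` and respects at least `η·|M|` pseudoedges of `M`. -/
noncomputable def Comfortable (H : BTB V) (M : Finset (Fin H.m × Fin H.m)) (η : ℝ)
    (S : Finset (V × Bool)) : Prop :=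
  H.FalsifiesNoClause S ∧
    η * M.card ≤ ((M.filter (fun e => H.Respects e.1 e.2 S)).card : ℝ)

/-- `S` is a guarded set of literals. -/
def Guarded (H : BTB V) (S : Finset (V × Bool)) : Prop :=
  Consistent S ∧ ∀ i j ℓ, H.IsCommonLeaf i j ℓ →
    ((ℓ, true) ∉ S ∧ (ℓ, false) ∉ S) ∨
    (∃ v ∈ H.clauseVerts i j ℓ, v ≠ ℓ ∧ (v, true) ∈ S) ∨
    ((ℓ, true) ∈ S ∧ ∀ v ∈ H.clauseVerts i j ℓ, v ≠ ℓ → (v, false) ∈ S)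

/-! #### Matching CNFs and matching OR-CNFs -/

/-- The 'half clause' `C^{1/2}_{i,j}`: the positive clause on the vertices of the path
from `t_i` (if `side = true`) or from `t_j` (if `side = false`) to the common leaf `ℓ`. -/
def halfClause (H : BTB V) (i j : Fin H.m) (ℓ : V) (side : Bool) : Finset (V × Bool) :=
  (if side then (H.tree i).pathVerts ℓ else (H.tree j).pathVerts ℓ).image (fun v => (v, true))

/-- The matching CNF w.r.t. `M` determined by the side choice `c`: one half clause per
pseudoedge of `M`.  The formulas of `CNF(M)` are exactly the CNFs `matchingCNF H M c`. -/
def matchingCNF (H : BTB V) (M : Finset (Fin H.m × Fin H.m))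
    (c : Fin H.m × Fin H.m → Bool) : Set (Finset (V × Bool)) :=
  {C | ∃ e ∈ M, ∃ ℓ, H.IsCommonLeaf e.1 e.2 ℓ ∧ C = H.halfClause e.1 e.2 ℓ (c e)}

/-- A matching OR-CNF w.r.t. `M` is determined by a map `Ψ` assigning to each assignment
`S₀` of the variables `V(H) \ ⋃M` a matching CNF (given by its side choice `Ψ S₀`);
the formula is `⋁_{S₀} (Conj(S₀) ∧ matchingCNF H M (Ψ S₀))`.  `S` satisfies it iff for
(the) `S₀ ⊆ S`, `S` satisfies the corresponding matching CNF. -/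
def SatORCNF (H : BTB V) (M : Finset (Fin H.m × Fin H.m))
    (Ψ : Finset (V × Bool) → (Fin H.m × Fin H.m) → Bool) (S : Finset (V × Bool)) : Prop :=
  ∃ S₀, AssignsExactly (Finset.univ \ H.matchingRoots M) S₀ ∧ S₀ ⊆ S ∧
    SatCNF (H.matchingCNF M (Ψ S₀)) S

/-- `X` is an `(a, b)`-determining set for the NBP `Z` computing `φ_H`. -/
def IsDeterminingSet (H : BTB V) (Z : NBP V) (a b : ℝ) (X : Finset (Fin Z.n)) : Prop :=
  (X.card : ℝ) ≤ a ∧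
  ∃ M : Finset (Fin H.m × Fin H.m), H.IsPseudomatching M ∧ b ≤ (M.card : ℝ) ∧
    ∃ Ψ : Finset (V × Bool) → (Fin H.m × Fin H.m) → Bool,
      ∀ p, Z.IsCompPath p → X ⊆ pathVertices p → H.SatORCNF M Ψ (pathLits p)

end BTB

/-!
The probability space on `SAT(H)` is an image of the uniform distribution on total assignments
`A : V → Bool`: `S` receives the `2 ^ |Fix(S)|` assignments agreeing with it outside `Fix(S)`
(its lift), and the lifts of distinct members of `SAT(H)` are disjoint.

For a pseudoedge `{t_i, t_j}` with common leaf `ℓ`, the event "the internal variables of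
`C_{i,j}` are false, their siblings true, and (unless `ℓ` is a root) `ℓ` is false and some root
true" forces every `S` whose lift contains `A` to respect `{t_i, t_j}`. The event only reads the
at most `4 L + 7` variables next to `P_{i,j}`, where `L = (log₂ m)/4.9` bounds the heights, so its
probability is at least `3 · 2^{-(4L+7)} = 100 η`; along a pseudomatching these variable sets are
disjoint, so the events are independent. Markov's inequality for `(1/100) ^ X` then gives
`Pr(X < η|M|) ≤ e^{-99 η |M|} · 100^{η |M|} ≤ 0.4^{100 η |M|}`.
-/

open Finset

section BooleanCube

variable {V : Type} [DecidableEq V] [Fintype V]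

theorem card_agreeOn (K : Finset V) (σ : V → Bool) :
    #{A : V → Bool | ∀ x ∈ K, A x = σ x} = 2 ^ #Kᶜ := by
  have hpi : ({A : V → Bool | ∀ x ∈ K, A x = σ x} : Finset _) =
      Fintype.piFinset fun x => if x ∈ K then {σ x} else univ := by
    ext A
    simp only [mem_filter, mem_univ, true_and, Fintype.mem_piFinset]
    refine forall_congr' fun x => ?_
    split_ifs with hx <;> simp [hx]
  rw [hpi, Fintype.card_piFinset]
  simp only [apply_ite Finset.card, card_singleton, card_univ, Fintype.card_bool]
  rw [prod_ite, prod_const_one, one_mul, prod_const]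
  simp [Finset.filter_not, Finset.compl_eq_univ_sdiff]

theorem card_mul_le_card_filter_of_agreeOn {ι : Type*} (s : Finset ι) (K : Finset V)
    (σ : ι → V → Bool) (hσ : ∀ a ∈ s, ∀ b ∈ s, a ≠ b → ∃ x ∈ K, σ a x ≠ σ b x)
    (Q : (V → Bool) → Prop) (hQ : ∀ a ∈ s, ∀ A : V → Bool, (∀ x ∈ K, A x = σ a x) → Q A) :
    #s * 2 ^ #Kᶜ ≤ #{A | Q A} := by
  have hdisj : (s : Set ι).PairwiseDisjoint
      fun a => ({A : V → Bool | ∀ x ∈ K, A x = σ a x} : Finset _) := by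
    intro a ha b hb hab
    refine disjoint_left.mpr fun A hA hA' => ?_
    obtain ⟨x, hx, hne⟩ := hσ a ha b hb hab
    simp only [mem_filter, mem_univ, true_and] at hA hA'
    exact hne ((hA x hx).symm.trans (hA' x hx))
  calc #s * 2 ^ #Kᶜ = #(s.biUnion fun a => {A : V → Bool | ∀ x ∈ K, A x = σ a x}) := by
        rw [card_biUnion hdisj, sum_congr rfl fun a _ => card_agreeOn K (σ a), sum_const,
          smul_eq_mul]
    _ ≤ #{A | Q A} := card_le_card fun A hA => by
        obtain ⟨a, ha, hA⟩ := mem_biUnion.mp hA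
        simp only [mem_filter, mem_univ, true_and] at hA ⊢
        exact hQ a ha A hA

theorem two_rpow_neg_mul_two_pow_le {K : Finset V} {x : ℝ}
    (hx : (#K : ℝ) ≤ x) : (2 : ℝ) ^ (-x) * 2 ^ Fintype.card V ≤ 2 ^ #Kᶜ := by
  have hsplit : (2 : ℝ) ^ Fintype.card V = 2 ^ #Kᶜ * 2 ^ #K := by
    rw [← pow_add, card_compl, Nat.sub_add_cancel (card_le_univ K)]
  calc (2 : ℝ) ^ (-x) * 2 ^ Fintype.card V ≤ (2 : ℝ) ^ (-(#K : ℝ)) * 2 ^ Fintype.card V := by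
        gcongr
        norm_num
    _ = 2 ^ #Kᶜ := by
        rw [Real.rpow_neg zero_le_two, Real.rpow_natCast, hsplit]
        field_simp

/-- Swapping the coordinates in `D` between two assignments turns `F A * G B` into
`F A * G A`. -/
theorem sum_mul_sum_of_dependsOn (D : Finset V) (F G : (V → Bool) → ℝ)
    (hF : ∀ A B : V → Bool, (∀ x ∈ D, A x = B x) → F A = F B)
    (hG : ∀ A B : V → Bool, (∀ x ∉ D, A x = B x) → G A = G B) :
    (∑ A, F A) * ∑ A, G A = 2 ^ Fintype.card V * ∑ A, F A * G A := by
  let swap : (V → Bool) × (V → Bool) → (V → Bool) × (V → Bool) := fun p =>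
    (fun x => if x ∈ D then p.1 x else p.2 x, fun x => if x ∈ D then p.2 x else p.1 x)
  have hswap : Function.Involutive swap := fun p => by
    ext x <;> by_cases hx : x ∈ D <;> simp [swap, hx]
  calc (∑ A, F A) * ∑ A, G A = ∑ p : (V → Bool) × (V → Bool), F p.1 * G p.2 := by
        rw [Fintype.sum_prod_type, sum_mul_sum]
    _ = ∑ p : (V → Bool) × (V → Bool), F (swap p).1 * G (swap p).2 :=
        (Equiv.sum_comp (hswap.toPerm swap) fun p : (V → Bool) × (V → Bool) => F p.1 * G p.2).symm
    _ = ∑ p : (V → Bool) × (V → Bool), F p.1 * G p.1 := by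
        refine sum_congr rfl fun p _ => ?_
        rw [hF _ p.1 fun x hx => if_pos hx, hG _ p.1 fun x hx => if_neg hx]
    _ = 2 ^ Fintype.card V * ∑ A, F A * G A := by
        simp [Fintype.sum_prod_type, ← mul_sum]

theorem sum_prod_div_eq_prod_sum_div {ι : Type*} (s : Finset ι) (D : ι → Finset V)
    (hD : (s : Set ι).PairwiseDisjoint D) (w : ι → (V → Bool) → ℝ)
    (hw : ∀ e ∈ s, ∀ A B : V → Bool, (∀ x ∈ D e, A x = B x) → w e A = w e B) :
    (∑ A, ∏ e ∈ s, w e A) / 2 ^ Fintype.card V =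
      ∏ e ∈ s, (∑ A, w e A) / 2 ^ Fintype.card V := by
  induction s using Finset.induction_on with
  | empty => simp
  | insert a s ha ih =>
    rw [coe_insert, Set.pairwiseDisjoint_insert_of_notMem (mem_coe.not.mpr ha)] at hD
    have hrest : ∀ A B : V → Bool, (∀ x ∉ D a, A x = B x) →
        ∏ e ∈ s, w e A = ∏ e ∈ s, w e B := fun A B hAB =>
      prod_congr rfl fun e he => hw e (mem_insert_of_mem he) A B fun x hx =>
        hAB x (disjoint_left.mp (hD.2 e he).symm hx)
    have hsplit := sum_mul_sum_of_dependsOn (D a) (w a) _ (hw a (mem_insert_self a s)) hrest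
    rw [prod_insert ha, ← ih hD.1 fun e he => hw e (mem_insert_of_mem he)]
    simp only [prod_insert ha]
    field_simp
    linear_combination hsplit.symm

theorem sum_ite_div_le_exp (R : (V → Bool) → Prop) {p q : ℝ}
    (hp : p * 2 ^ Fintype.card V ≤ #{A | R A}) (hq : q ≤ 1) :
    (∑ A, if R A then q else 1) / 2 ^ Fintype.card V ≤ Real.exp (-((1 - q) * p)) := by
  set N : ℝ := 2 ^ Fintype.card V
  have hN : 0 < N := by positivity
  have hcard : (#{A | R A} : ℝ) + #{A | ¬R A} = N := by
    rw [← Nat.cast_add, card_filter_add_card_filter_not, card_univ, Fintype.card_fun,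
      Fintype.card_bool]
    push_cast
    rfl
  have hfreq : p ≤ #{A | R A} / N := by rwa [le_div_iff₀ hN]
  calc (∑ A, if R A then q else 1) / N = 1 - (1 - q) * (#{A | R A} / N) := by
        rw [sum_ite, sum_const, sum_const, nsmul_eq_mul, nsmul_eq_mul, mul_one,
          eq_sub_of_add_eq' hcard]
        field_simp
        ring
    _ ≤ 1 - (1 - q) * p := by nlinarith
    _ ≤ Real.exp (-((1 - q) * p)) := by linarith [Real.add_one_le_exp (-((1 - q) * p))]

/-- Markov's inequality for `q ^ X`, where `X` counts the events that occur; independence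
factorises the mean of `q ^ X`. -/
theorem card_filter_card_lt_mul_rpow_le {ι : Type*} (s : Finset ι) (D : ι → Finset V)
    (hD : (s : Set ι).PairwiseDisjoint D) (R : ι → (V → Bool) → Prop)
    (hR : ∀ e ∈ s, ∀ A B : V → Bool, (∀ x ∈ D e, A x = B x) → R e A → R e B)
    {p : ℝ} (hp : ∀ e ∈ s, p * 2 ^ Fintype.card V ≤ #{A | R e A})
    {q t : ℝ} (hq₀ : 0 < q) (hq₁ : q ≤ 1) :
    #{A : V → Bool | (#{e ∈ s | R e A} : ℝ) < t} * q ^ t ≤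
      2 ^ Fintype.card V * Real.exp (-((1 - q) * p * #s)) := by
  set N : ℝ := 2 ^ Fintype.card V
  let w : ι → (V → Bool) → ℝ := fun e A => if R e A then q else 1
  have hw : ∀ e ∈ s, ∀ A B : V → Bool, (∀ x ∈ D e, A x = B x) → w e A = w e B :=
    fun e he A B hAB => by
      simp only [w, propext ⟨hR e he A B hAB, hR e he B A fun x hx => (hAB x hx).symm⟩]
  have hw₀ : ∀ e A, 0 ≤ w e A := fun e A => by
    simp only [w]
    split_ifs <;> linarith
  calc #{A : V → Bool | (#{e ∈ s | R e A} : ℝ) < t} * q ^ t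
      = ∑ A with (#{e ∈ s | R e A} : ℝ) < t, q ^ t := by rw [sum_const, nsmul_eq_mul]
    _ ≤ ∑ A with (#{e ∈ s | R e A} : ℝ) < t, ∏ e ∈ s, w e A := by
        refine sum_le_sum fun A hA => ?_
        rw [prod_ite, prod_const, prod_const_one, mul_one, ← Real.rpow_natCast]
        exact Real.rpow_le_rpow_of_exponent_ge hq₀ hq₁ (mem_filter.mp hA).2.le
    _ ≤ ∑ A, ∏ e ∈ s, w e A :=
        sum_le_sum_of_subset_of_nonneg (filter_subset _ _)
          fun A _ _ => prod_nonneg fun e _ => hw₀ e A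
    _ = N * ∏ e ∈ s, (∑ A, w e A) / N := by
        rw [← sum_prod_div_eq_prod_sum_div s D hD w hw, mul_div_cancel₀ _ (by positivity)]
    _ ≤ N * ∏ _e ∈ s, Real.exp (-((1 - q) * p)) := by
        gcongr with e he
        exact sum_ite_div_le_exp (R e) (hp e he) hq₁
    _ = N * Real.exp (-((1 - q) * p * #s)) := by
        rw [prod_const, ← Real.exp_nat_mul]
        ring_nf

end BooleanCube

namespace RootedTree

variable {V : Type} [DecidableEq V] (T : RootedTree V)

theorem eq_root_of_depth_eq_zero {v : V} (hv : v ∈ T.verts) (h : T.depth v = 0) :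
    v = T.root := by
  by_contra hne
  have := T.depth_parent v hv hne
  omega

theorem iterate_parent_mem_verts_and_depth {ℓ : V} (hℓ : ℓ ∈ T.verts) (k : ℕ) :
    k ≤ T.depth ℓ → T.parent^[k] ℓ ∈ T.verts ∧ T.depth (T.parent^[k] ℓ) = T.depth ℓ - k := by
  induction k with
  | zero => exact fun _ => ⟨hℓ, rfl⟩
  | succ k ih =>
    intro hk
    obtain ⟨hmem, hdepth⟩ := ih (by omega)
    have hne : T.parent^[k] ℓ ≠ T.root := fun h => by
      rw [h, T.depth_root] at hdepth
      omega
    have := T.depth_parent _ hmem hne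
    rw [Function.iterate_succ_apply']
    exact ⟨T.parent_mem _ hmem hne, by omega⟩

theorem mem_pathVerts {ℓ v : V} : v ∈ T.pathVerts ℓ ↔ ∃ k ≤ T.depth ℓ, T.parent^[k] ℓ = v := by
  simp [pathVerts]

variable {T} {ℓ : V}

theorem pathVerts_subset (hℓ : ℓ ∈ T.verts) : T.pathVerts ℓ ⊆ T.verts := fun v hv => by
  obtain ⟨k, hk, rfl⟩ := T.mem_pathVerts.1 hv
  exact (T.iterate_parent_mem_verts_and_depth hℓ k hk).1

theorem root_mem_pathVerts (hℓ : ℓ ∈ T.verts) : T.root ∈ T.pathVerts ℓ := by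
  obtain ⟨hmem, hdepth⟩ := T.iterate_parent_mem_verts_and_depth hℓ _ le_rfl
  rw [← T.eq_root_of_depth_eq_zero hmem (by omega)]
  exact T.mem_pathVerts.2 ⟨_, le_rfl, rfl⟩

theorem notMem_leaves_of_mem_pathVerts (hℓ : ℓ ∈ T.verts) {v : V} (hv : v ∈ T.pathVerts ℓ)
    (hne : v ≠ ℓ) : v ∉ T.leaves := by
  obtain ⟨k, hk, rfl⟩ := T.mem_pathVerts.1 hv
  obtain ⟨j, rfl⟩ : ∃ j, k = j + 1 := Nat.exists_eq_succ_of_ne_zero (by rintro rfl; exact hne rfl)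
  obtain ⟨hmem, hdepth⟩ := T.iterate_parent_mem_verts_and_depth hℓ j (by omega)
  have hne_root : T.parent^[j] ℓ ≠ T.root := fun h => by
    rw [h, T.depth_root] at hdepth
    omega
  have hchild : T.parent^[j] ℓ ∈ T.children (T.parent^[j + 1] ℓ) := by
    rw [Function.iterate_succ_apply']
    exact mem_filter.2 ⟨hmem, hne_root, rfl⟩
  intro hleaf
  rw [(mem_filter.1 hleaf).2] at hchild
  exact notMem_empty _ hchild

theorem eq_of_mem_pathVerts_of_depth_eq (hℓ : ℓ ∈ T.verts) {v w : V} (hv : v ∈ T.pathVerts ℓ)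
    (hw : w ∈ T.pathVerts ℓ) (h : T.depth v = T.depth w) : v = w := by
  obtain ⟨a, ha, rfl⟩ := T.mem_pathVerts.1 hv
  obtain ⟨b, hb, rfl⟩ := T.mem_pathVerts.1 hw
  rw [(T.iterate_parent_mem_verts_and_depth hℓ a ha).2,
    (T.iterate_parent_mem_verts_and_depth hℓ b hb).2] at h
  rw [show a = b by omega]

theorem card_pathVerts_sdiff_le (hℓ : ℓ ∈ T.verts) :
    #(T.pathVerts ℓ \ {T.root, ℓ}) ≤ T.depth ℓ - 1 := by
  calc #(T.pathVerts ℓ \ {T.root, ℓ})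
      ≤ #((Ioo 0 (T.depth ℓ)).image fun k => T.parent^[k] ℓ) := by
        refine card_le_card fun v hv => ?_
        obtain ⟨hv, hv'⟩ := mem_sdiff.1 hv
        obtain ⟨k, hk, rfl⟩ := T.mem_pathVerts.1 hv
        simp only [mem_insert, mem_singleton, not_or] at hv'
        refine mem_image.2 ⟨k, mem_Ioo.2 ⟨Nat.pos_of_ne_zero ?_, lt_of_le_of_ne hk ?_⟩, rfl⟩
        · rintro rfl
          exact hv'.2 rfl
        · rintro rfl
          obtain ⟨hmem, hdepth⟩ := T.iterate_parent_mem_verts_and_depth hℓ _ le_rfl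
          exact hv'.1 (T.eq_root_of_depth_eq_zero hmem (by omega))
    _ ≤ T.depth ℓ - 1 := card_image_le.trans (by simp)

theorem depth_add_one_le_height {v : V} (hv : v ∈ T.verts) : T.depth v + 1 ≤ T.height :=
  Nat.succ_le_succ (le_sup hv)

theorem card_children_erase_le_one (hT : T.IsBinary) {u v : V} (hv : v ∈ T.children u) :
    #((T.children u).erase v) ≤ 1 := by
  obtain ⟨hvT, hroot, rfl⟩ := mem_filter.1 hv
  have := hT _ (T.parent_mem v hvT hroot)
  rw [card_erase_of_mem hv]
  omega

end RootedTree

namespace BTB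

variable {V : Type} [DecidableEq V] [Fintype V] (H : BTB V)

theorem mem_leaves_of_mem_of_mem {i j : Fin H.m} (hij : i ≠ j) {v : V}
    (hi : v ∈ (H.tree i).verts) (hj : v ∈ (H.tree j).verts) : v ∈ (H.tree i).leaves :=
  (H.common_leaf i j hij v hi hj).1

variable {H}

theorem IsCommonLeaf.symm {i j : Fin H.m} {ℓ : V} (h : H.IsCommonLeaf i j ℓ) :
    H.IsCommonLeaf j i ℓ :=
  ⟨h.1.symm, h.2.2, h.2.1⟩

theorem IsCommonLeaf.mem_verts_left {i j : Fin H.m} {ℓ : V} (h : H.IsCommonLeaf i j ℓ) :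
    ℓ ∈ (H.tree i).verts :=
  (mem_filter.1 h.2.1).1

theorem IsCommonLeaf.eq_or_eq {i j : Fin H.m} {ℓ : V} (h : H.IsCommonLeaf i j ℓ) {k : Fin H.m}
    (hk : ℓ ∈ (H.tree k).verts) : k = i ∨ k = j := by
  by_contra! hne
  have hsub : ({i, j, k} : Finset (Fin H.m)) ⊆ univ.filter fun k => ℓ ∈ (H.tree k).leaves := by
    intro a ha
    simp only [mem_insert, mem_singleton] at ha
    rcases ha with rfl | rfl | rfl
    · simpa using h.2.1
    · simpa using h.2.2
    · simpa using H.mem_leaves_of_mem_of_mem hne.1 hk h.mem_verts_left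
  have := card_le_card hsub
  rw [H.leaf_two i ℓ h.2.1, card_insert_of_notMem (by simp [h.1, hne.1.symm]),
    card_pair hne.2.symm] at this
  omega

variable (H) in
def NonLeafIn (k : Fin H.m) (v : V) : Prop :=
  v ∈ (H.tree k).verts ∧ v ∉ (H.tree k).leaves

theorem NonLeafIn.eq_of_mem {k k' : Fin H.m} {v : V} (h : H.NonLeafIn k v)
    (h' : v ∈ (H.tree k').verts) : k' = k := by
  by_contra hne
  exact h.2 (H.mem_leaves_of_mem_of_mem (Ne.symm hne) h.1 h')

theorem NonLeafIn.not_isCommonLeaf {k : Fin H.m} {v : V} (h : H.NonLeafIn k v) (a b : Fin H.m) :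
    ¬H.IsCommonLeaf a b v := fun hcl => by
  have := h.eq_of_mem hcl.mem_verts_left
  subst this
  exact h.2 hcl.2.1

theorem NonLeafIn.notMem_Fix {k : Fin H.m} {v : V} (h : H.NonLeafIn k v)
    (S : Finset (V × Bool)) : v ∉ H.Fix S := fun ⟨a, b, hcl, _⟩ =>
  h.not_isCommonLeaf a b hcl

theorem nonLeafIn_of_mem_pathVerts {k : Fin H.m} {ℓ v : V} (hℓ : ℓ ∈ (H.tree k).verts)
    (hv : v ∈ (H.tree k).pathVerts ℓ) (hne : v ≠ ℓ) : H.NonLeafIn k v :=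
  ⟨RootedTree.pathVerts_subset hℓ hv, RootedTree.notMem_leaves_of_mem_pathVerts hℓ hv hne⟩

theorem NonLeafIn.sibling {k : Fin H.m} {v w : V} (hv : H.NonLeafIn k v) (hs : H.Sibling v w) :
    v ∈ (H.tree k).children ((H.tree k).parent v) ∧
      w ∈ ((H.tree k).children ((H.tree k).parent v)).erase v := by
  obtain ⟨k', hvk, hwk, hvr, hwr, hvw, hpar⟩ := hs
  obtain rfl := hv.eq_of_mem hvk
  exact ⟨mem_filter.2 ⟨hvk, hvr, rfl⟩, mem_erase.2 ⟨hvw.symm, mem_filter.2 ⟨hwk, hwr, hpar.symm⟩⟩⟩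

/-- A leaf of an extended tree has no sibling. -/
theorem NonLeafIn.nonLeafIn_of_sibling {k : Fin H.m} {v w : V} (hv : H.NonLeafIn k v)
    (hs : H.Sibling v w) : H.NonLeafIn k w ∧ w ≠ (H.tree k).root := by
  obtain ⟨hvc, hwc⟩ := hv.sibling hs
  obtain ⟨hwv, hwc⟩ := mem_erase.1 hwc
  obtain ⟨hwT, hwr, hpar⟩ := mem_filter.1 hwc
  refine ⟨⟨hwT, fun hleaf => hwv ?_⟩, hwr⟩
  have := H.extended k w hwT hwr (mem_filter.1 hleaf).2
  rw [hpar] at this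
  rw [this] at hvc
  exact (mem_singleton.1 hvc).symm

variable (H)

def interior (i j : Fin H.m) (ℓ : V) : Finset V :=
  H.clauseVerts i j ℓ \ {(H.tree i).root, (H.tree j).root, ℓ}

noncomputable def siblings (i j : Fin H.m) (ℓ : V) : Finset V :=
  (H.interior i j ℓ).biUnion fun v => univ.filter (H.Sibling v)

noncomputable def eventSupport (i j : Fin H.m) (ℓ : V) : Finset V :=
  H.interior i j ℓ ∪ H.siblings i j ℓ ∪ {ℓ, (H.tree i).root, (H.tree j).root}

/-- The true root is what keeps `ℓ` out of `Fix(S)` (`notMem_Fix_of_root`). -/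
def RespectEvent (i j : Fin H.m) (ℓ : V) (A : V → Bool) : Prop :=
  (∀ v ∈ H.interior i j ℓ, A v = false) ∧ (∀ w ∈ H.siblings i j ℓ, A w = true) ∧
    (ℓ ≠ (H.tree i).root → ℓ ≠ (H.tree j).root →
      A ℓ = false ∧ (A (H.tree i).root = true ∨ A (H.tree j).root = true))

variable {H} {i j : Fin H.m} {ℓ : V}

theorem ne_of_mem_interior {v : V} (hv : v ∈ H.interior i j ℓ) :
    v ≠ (H.tree i).root ∧ v ≠ (H.tree j).root ∧ v ≠ ℓ := by
  simpa [interior, not_or] using (mem_sdiff.1 hv).2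

theorem nonLeafIn_of_mem_clauseVerts (hcl : H.IsCommonLeaf i j ℓ) {v : V}
    (hv : v ∈ H.clauseVerts i j ℓ) (hvℓ : v ≠ ℓ) :
    ∃ k, (k = i ∨ k = j) ∧ v ∈ (H.tree k).pathVerts ℓ ∧ H.NonLeafIn k v := by
  rcases mem_union.1 hv with hp | hp
  · exact ⟨i, Or.inl rfl, hp, nonLeafIn_of_mem_pathVerts hcl.mem_verts_left hp hvℓ⟩
  · exact ⟨j, Or.inr rfl, hp, nonLeafIn_of_mem_pathVerts hcl.symm.mem_verts_left hp hvℓ⟩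

theorem nonLeafIn_of_mem_interior (hcl : H.IsCommonLeaf i j ℓ) {v : V}
    (hv : v ∈ H.interior i j ℓ) :
    ∃ k, (k = i ∨ k = j) ∧ v ∈ (H.tree k).pathVerts ℓ ∧ H.NonLeafIn k v :=
  nonLeafIn_of_mem_clauseVerts hcl (mem_sdiff.1 hv).1 (ne_of_mem_interior hv).2.2

theorem mem_siblings {w : V} : w ∈ H.siblings i j ℓ ↔ ∃ v ∈ H.interior i j ℓ, H.Sibling v w := by
  simp [siblings]

theorem nonLeafIn_of_mem_siblings (hcl : H.IsCommonLeaf i j ℓ) {w : V}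
    (hw : w ∈ H.siblings i j ℓ) :
    ∃ k, (k = i ∨ k = j) ∧ H.NonLeafIn k w ∧ w ≠ (H.tree k).root := by
  obtain ⟨v, hv, hs⟩ := mem_siblings.1 hw
  obtain ⟨k, hk, -, hvk⟩ := nonLeafIn_of_mem_interior hcl hv
  exact ⟨k, hk, hvk.nonLeafIn_of_sibling hs⟩

theorem card_siblings_le (hcl : H.IsCommonLeaf i j ℓ) :
    #(H.siblings i j ℓ) ≤ #(H.interior i j ℓ) := by
  refine card_biUnion_le.trans (sum_le_card_nsmul _ _ 1 fun v hv => ?_) |>.trans (by simp)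
  obtain ⟨k, -, -, hvk⟩ := nonLeafIn_of_mem_interior hcl hv
  refine card_le_one.2 fun w hw w' hw' => ?_
  obtain ⟨hvc, hwc⟩ := hvk.sibling (mem_filter.1 hw).2
  exact card_le_one.1 ((H.tree k).card_children_erase_le_one (H.binary k) hvc) w hwc w'
    (hvk.sibling (mem_filter.1 hw').2).2

/-- Siblings have the same depth, while distinct vertices of a root-leaf path do not. -/
theorem disjoint_interior_siblings (hcl : H.IsCommonLeaf i j ℓ) :
    Disjoint (H.interior i j ℓ) (H.siblings i j ℓ) := by
  refine disjoint_left.2 fun w hwI hwS => ?_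
  obtain ⟨v, hv, hs⟩ := mem_siblings.1 hwS
  obtain ⟨k, hk, hvp, hvk⟩ := nonLeafIn_of_mem_interior hcl hv
  obtain ⟨k', -, hwp, hwk⟩ := nonLeafIn_of_mem_interior hcl hwI
  obtain ⟨hvc, hwc⟩ := hvk.sibling hs
  obtain ⟨hwv, hwc⟩ := mem_erase.1 hwc
  obtain ⟨hwT, hwr, hwpar⟩ := mem_filter.1 hwc
  obtain ⟨hvT, hvr, -⟩ := mem_filter.1 hvc
  obtain rfl := hwk.eq_of_mem hwT
  have hℓ : ℓ ∈ (H.tree k).verts := by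
    rcases hk with rfl | rfl
    exacts [hcl.mem_verts_left, hcl.symm.mem_verts_left]
  have hdepth := (H.tree k).depth_parent w hwT hwr
  rw [hwpar, ← (H.tree k).depth_parent v hvT hvr] at hdepth
  exact hwv (RootedTree.eq_of_mem_pathVerts_of_depth_eq hℓ hwp hvp hdepth)

theorem root_notMem_siblings (hcl : H.IsCommonLeaf i j ℓ) (k : Fin H.m) :
    (H.tree k).root ∉ H.siblings i j ℓ := fun hw => by
  obtain ⟨k', -, hwk, hwr⟩ := nonLeafIn_of_mem_siblings hcl hw
  exact hwr (by rw [hwk.eq_of_mem (H.tree k).root_mem])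

theorem leaf_notMem_siblings (hcl : H.IsCommonLeaf i j ℓ) : ℓ ∉ H.siblings i j ℓ := fun hw => by
  obtain ⟨k, -, hwk, -⟩ := nonLeafIn_of_mem_siblings hcl hw
  exact hwk.not_isCommonLeaf i j hcl

theorem eq_or_eq_of_mem_eventSupport (hcl : H.IsCommonLeaf i j ℓ) {x : V}
    (hx : x ∈ H.eventSupport i j ℓ) {k : Fin H.m} (hk : x ∈ (H.tree k).verts) :
    k = i ∨ k = j := by
  have hroot : ∀ {a b : Fin H.m}, H.IsCommonLeaf a b ℓ → (H.tree a).root ∈ (H.tree k).verts →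
      k = a ∨ k = b := fun {a b} hcl hk => by
    by_cases hrℓ : (H.tree a).root = ℓ
    · exact hcl.eq_or_eq (hrℓ ▸ hk)
    · exact Or.inl ((nonLeafIn_of_mem_pathVerts hcl.mem_verts_left
        ((H.tree a).root_mem_pathVerts hcl.mem_verts_left) hrℓ).eq_of_mem hk)
  simp only [eventSupport, mem_union, mem_insert, mem_singleton] at hx
  rcases hx with (hx | hx) | rfl | rfl | rfl
  · obtain ⟨k', hk', -, hxk⟩ := nonLeafIn_of_mem_interior hcl hx
    exact hxk.eq_of_mem hk ▸ hk'
  · obtain ⟨k', hk', hxk, -⟩ := nonLeafIn_of_mem_siblings hcl hx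
    exact hxk.eq_of_mem hk ▸ hk'
  · exact hcl.eq_or_eq hk
  · exact hroot hcl hk
  · exact (hroot hcl.symm hk).symm

theorem disjoint_eventSupport {i' j' : Fin H.m} {ℓ' : V} (hcl : H.IsCommonLeaf i j ℓ)
    (hcl' : H.IsCommonLeaf i' j' ℓ') (h₁ : i ≠ i') (h₂ : i ≠ j') (h₃ : j ≠ i') (h₄ : j ≠ j') :
    Disjoint (H.eventSupport i j ℓ) (H.eventSupport i' j' ℓ') := by
  refine disjoint_left.2 fun x hx hx' => ?_
  obtain ⟨k, hk⟩ := H.cover x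
  rcases eq_or_eq_of_mem_eventSupport hcl hx hk with rfl | rfl <;>
    rcases eq_or_eq_of_mem_eventSupport hcl' hx' hk with h | h <;> tauto

theorem card_eventSupport_le (hcl : H.IsCommonLeaf i j ℓ) :
    #(H.eventSupport i j ℓ) ≤ 2 * ((H.tree i).height - 2 + ((H.tree j).height - 2)) + 3 := by
  have hside : ∀ {a b : Fin H.m}, H.IsCommonLeaf a b ℓ →
      #((H.tree a).pathVerts ℓ \ {(H.tree a).root, ℓ}) ≤ (H.tree a).height - 2 := fun hcl =>
    (RootedTree.card_pathVerts_sdiff_le hcl.mem_verts_left).trans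
      (by have := (H.tree _).depth_add_one_le_height hcl.mem_verts_left; omega)
  have hI : #(H.interior i j ℓ) ≤ (H.tree i).height - 2 + ((H.tree j).height - 2) := by
    refine (card_le_card fun v hv => ?_).trans ((card_union_le _ _).trans
      (add_le_add (hside hcl) (hside hcl.symm)))
    obtain ⟨hri, hrj, hvℓ⟩ := ne_of_mem_interior hv
    rcases mem_union.1 (mem_sdiff.1 hv).1 with hp | hp
    · exact mem_union.2 (Or.inl (mem_sdiff.2 ⟨hp, by simp [hri, hvℓ]⟩))
    · exact mem_union.2 (Or.inr (mem_sdiff.2 ⟨hp, by simp [hrj, hvℓ]⟩))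
  have := card_siblings_le hcl
  have h3 : #({ℓ, (H.tree i).root, (H.tree j).root} : Finset V) ≤ 3 := card_le_three
  have := card_union_le (H.interior i j ℓ ∪ H.siblings i j ℓ) {ℓ, (H.tree i).root, (H.tree j).root}
  have := card_union_le (H.interior i j ℓ) (H.siblings i j ℓ)
  simp only [eventSupport]
  omega

theorem RespectEvent.congr {A B : V → Bool} (hA : H.RespectEvent i j ℓ A)
    (hAB : ∀ x ∈ H.eventSupport i j ℓ, A x = B x) : H.RespectEvent i j ℓ B := by
  simp only [eventSupport, mem_union, mem_insert, mem_singleton] at hAB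
  obtain ⟨hI, hS, hℓ⟩ := hA
  refine ⟨fun v hv => hAB v (Or.inl (Or.inl hv)) ▸ hI v hv,
    fun w hw => hAB w (Or.inl (Or.inr hw)) ▸ hS w hw, fun hi hj => ?_⟩
  rw [← hAB ℓ (by simp), ← hAB _ (by simp), ← hAB _ (by simp)]
  exact hℓ hi hj

theorem three_mul_le_card_respectEvent (hcl : H.IsCommonLeaf i j ℓ) :
    3 * 2 ^ #(H.eventSupport i j ℓ)ᶜ ≤ #{A | H.RespectEvent i j ℓ A} := by
  let σ : Bool × Bool → V → Bool := fun b x =>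
    if x ∈ H.siblings i j ℓ then true
    else if x = (H.tree i).root then b.1
    else if x = (H.tree j).root then b.2 else false
  have hri : (H.tree i).root ≠ (H.tree j).root := fun h => hcl.1 (H.roots_inj h)
  have hσi : ∀ b, σ b (H.tree i).root = b.1 := by simp [σ, root_notMem_siblings hcl]
  have hσj : ∀ b, σ b (H.tree j).root = b.2 := by simp [σ, root_notMem_siblings hcl, hri.symm]
  have hmem : ∀ x ∈ ({ℓ, (H.tree i).root, (H.tree j).root} : Finset V),
      x ∈ H.eventSupport i j ℓ := fun x hx => mem_union_right _ hx
  refine (card_mul_le_card_filter_of_agreeOn {(true, true), (true, false), (false, true)}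
    (H.eventSupport i j ℓ) σ ?_ _ ?_)
  · intro a _ b _ hab
    by_cases h₁ : a.1 = b.1
    · exact ⟨(H.tree j).root, hmem _ (by simp), by
        rw [hσj, hσj]; exact fun h₂ => hab (Prod.ext h₁ h₂)⟩
    · exact ⟨(H.tree i).root, hmem _ (by simp), by rwa [hσi, hσi]⟩
  · intro b hb A hA
    refine ⟨fun v hv => ?_, fun w hw => ?_, fun hℓi hℓj => ?_⟩
    · obtain ⟨hvi, hvj, -⟩ := ne_of_mem_interior hv
      rw [hA v (mem_union_left _ (mem_union_left _ hv))]
      simp [σ, disjoint_left.1 (disjoint_interior_siblings hcl) hv, hvi, hvj]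
    · rw [hA w (mem_union_left _ (mem_union_right _ hw))]
      simp [σ, hw]
    · rw [hA _ (hmem _ (by simp)), hA _ (hmem _ (by simp)), hA _ (hmem _ (by simp)), hσi, hσj]
      refine ⟨by simp [σ, leaf_notMem_siblings hcl, hℓi, hℓj], ?_⟩
      simp only [mem_insert, mem_singleton] at hb
      rcases hb with rfl | rfl | rfl <;> simp

theorem mul_two_pow_le_card_respectEvent (hcl : H.IsCommonLeaf i j ℓ) {L : ℝ} (hL : 0 ≤ L)
    (hi : ((H.tree i).height : ℝ) ≤ L + 3) (hj : ((H.tree j).height : ℝ) ≤ L + 3) :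
    3 * (2 : ℝ) ^ (-(4 * L + 7)) * 2 ^ Fintype.card V ≤ #{A | H.RespectEvent i j ℓ A} := by
  have hside : ∀ h : ℕ, (h : ℝ) ≤ L + 3 → ((h - 2 : ℕ) : ℝ) ≤ L + 1 := fun h hh => by
    rcases le_total 2 h with h2 | h2
    · rw [Nat.cast_sub h2]
      push_cast
      linarith
    · rw [Nat.sub_eq_zero_of_le h2, Nat.cast_zero]
      linarith
  have hK : (#(H.eventSupport i j ℓ) : ℝ) ≤ 4 * L + 7 := by
    have : (#(H.eventSupport i j ℓ) : ℝ) ≤ 2 * (((H.tree i).height - 2 : ℕ) +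
        ((H.tree j).height - 2 : ℕ) : ℝ) + 3 := by exact_mod_cast card_eventSupport_le hcl
    linarith [hside _ hi, hside _ hj]
  calc 3 * (2 : ℝ) ^ (-(4 * L + 7)) * 2 ^ Fintype.card V
      ≤ 3 * 2 ^ #(H.eventSupport i j ℓ)ᶜ := by
        rw [mul_assoc]
        gcongr
        exact two_rpow_neg_mul_two_pow_le hK
    _ ≤ #{A | H.RespectEvent i j ℓ A} := by exact_mod_cast three_mul_le_card_respectEvent hcl

end BTB

def litValue {V : Type} [DecidableEq V] (S : Finset (V × Bool)) (v : V) : Bool :=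
  decide ((v, true) ∈ S)

theorem mem_iff_litValue_eq {V : Type} [DecidableEq V] [Fintype V] {S : Finset (V × Bool)}
    (hS : AssignsExactly univ S) (v : V) (b : Bool) : (v, b) ∈ S ↔ litValue S v = b := by
  obtain ⟨b₀, hb₀, huniq⟩ := hS.2 v (mem_univ v)
  have hval : litValue S v = b₀ := by
    cases b₀
    · simpa [litValue] using fun h => Bool.noConfusion (huniq true h)
    · simpa [litValue] using hb₀
  rw [hval]
  exact ⟨fun h => (huniq b h).symm, fun h => h ▸ hb₀⟩

namespace BTB

variable {V : Type} [DecidableEq V] [Fintype V] (H : BTB V)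

noncomputable def lift (S : Finset (V × Bool)) : Finset (V → Bool) :=
  {A | ∀ v ∈ ({v | v ∉ H.Fix S} : Finset V), A v = litValue S v}

theorem weight_eq_card_lift_div (S : Finset (V × Bool)) :
    H.weight S = #(H.lift S) / 2 ^ Fintype.card V := by
  set F : Finset V := {v | v ∈ H.Fix S}
  have hFix : H.Fix S = F := by ext; simp [F]
  have hcard : #(H.lift S) = 2 ^ #F := by
    rw [lift, card_agreeOn, compl_filter]
    simp only [not_not, F]
  have hsplit : (2 : ℝ) ^ Fintype.card V = 2 ^ (Fintype.card V - #F) * 2 ^ #F := by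
    rw [← pow_add, Nat.sub_add_cancel (card_le_univ F)]
  rw [weight, hFix, Set.ncard_coe_finset, hcard, hsplit]
  push_cast
  rw [one_div, inv_pow]
  field_simp

variable {H}

theorem apply_eq_litValue_of_mem_lift {S : Finset (V × Bool)} {A : V → Bool}
    (hA : A ∈ H.lift S) {v : V} (hv : v ∉ H.Fix S) : A v = litValue S v :=
  (mem_filter.1 hA).2 v (by simpa using hv)

theorem litValue_eq_true_of_mem_Fix {S : Finset (V × Bool)} {v : V} (hv : v ∈ H.Fix S) :
    litValue S v = true := by
  obtain ⟨-, -, -, hvS, -⟩ := hv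
  simpa [litValue] using hvS

theorem litValue_eq_true_of_mem_lift {S : Finset (V × Bool)} {A : V → Bool} (hA : A ∈ H.lift S)
    {v : V} (hv : A v = true) : litValue S v = true := by
  by_cases hfix : v ∈ H.Fix S
  · exact litValue_eq_true_of_mem_Fix hfix
  · rwa [← apply_eq_litValue_of_mem_lift hA hfix]

/-- The other variables of the clause are internal, so `S₂` agrees with `S₁` on them (false) and
must satisfy the clause through the leaf. -/
theorem litValue_eq_true_of_mem_Fix_of_mem_lift {S₁ S₂ : Finset (V × Bool)}
    (hS₁ : AssignsExactly univ S₁) (hS₂ : S₂ ∈ H.SATH) {A : V → Bool} (hA₁ : A ∈ H.lift S₁)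
    (hA₂ : A ∈ H.lift S₂) {v : V} (hv : v ∈ H.Fix S₁) : litValue S₂ v = true := by
  obtain ⟨a, b, hcl, -, hfalse⟩ := hv
  obtain ⟨hS₂, hsat⟩ := (mem_filter.1 hS₂).2
  obtain ⟨u, hu, hutrue⟩ := hsat a b v hcl
  rw [mem_iff_litValue_eq hS₂] at hutrue
  by_cases huv : u = v
  · exact huv ▸ hutrue
  obtain ⟨k, -, -, huk⟩ := nonLeafIn_of_mem_clauseVerts hcl hu huv
  rw [← apply_eq_litValue_of_mem_lift hA₂ (huk.notMem_Fix S₂),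
    apply_eq_litValue_of_mem_lift hA₁ (huk.notMem_Fix S₁),
    (mem_iff_litValue_eq hS₁ u false).1 (hfalse u hu huv)] at hutrue
  exact absurd hutrue Bool.false_ne_true

theorem eq_of_mem_lift_of_mem_lift {S S' : Finset (V × Bool)} (hS : S ∈ H.SATH)
    (hS' : S' ∈ H.SATH) {A : V → Bool} (hA : A ∈ H.lift S) (hA' : A ∈ H.lift S') : S = S' := by
  have hSa := (mem_filter.1 hS).2.1
  have hSa' := (mem_filter.1 hS').2.1
  ext ⟨v, b⟩
  rw [mem_iff_litValue_eq hSa, mem_iff_litValue_eq hSa']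
  suffices litValue S v = litValue S' v by rw [this]
  by_cases hv : v ∈ H.Fix S
  · rw [litValue_eq_true_of_mem_Fix hv,
      litValue_eq_true_of_mem_Fix_of_mem_lift hSa hS' hA hA' hv]
  by_cases hv' : v ∈ H.Fix S'
  · rw [litValue_eq_true_of_mem_Fix hv',
      litValue_eq_true_of_mem_Fix_of_mem_lift hSa' hS hA' hA hv']
  rw [← apply_eq_litValue_of_mem_lift hA hv, ← apply_eq_litValue_of_mem_lift hA' hv']

theorem Pr_le_card_div {E : Finset (V × Bool) → Prop} {Q : (V → Bool) → Prop}
    (hQ : ∀ S ∈ H.SATH, E S → ∀ A ∈ H.lift S, Q A) :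
    H.Pr E ≤ #{A | Q A} / 2 ^ Fintype.card V := by
  have hdisj : ((H.SATH.filter E : Finset _) : Set (Finset (V × Bool))).PairwiseDisjoint H.lift :=
    fun S hS S' hS' hne => disjoint_left.2 fun A hA hA' =>
      hne (eq_of_mem_lift_of_mem_lift (mem_filter.1 hS).1 (mem_filter.1 hS').1 hA hA')
  have hsub : (H.SATH.filter E).biUnion H.lift ⊆ ({A | Q A} : Finset _) := fun A hA => by
    obtain ⟨S, hS, hA⟩ := mem_biUnion.1 hA
    obtain ⟨hS, hE⟩ := mem_filter.1 hS
    simpa using hQ S hS hE A hA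
  calc H.Pr E = #((H.SATH.filter E).biUnion H.lift) / 2 ^ Fintype.card V := by
        rw [Pr, card_biUnion hdisj, Nat.cast_sum, sum_div]
        exact sum_congr rfl fun S _ => H.weight_eq_card_lift_div S
    _ ≤ #{A | Q A} / 2 ^ Fintype.card V := by
        gcongr

variable {i j : Fin H.m} {ℓ : V}

theorem root_mem_clauseVerts (hcl : H.IsCommonLeaf i j ℓ) {k : Fin H.m} (hk : k = i ∨ k = j) :
    (H.tree k).root ∈ H.clauseVerts i j ℓ := by
  rcases hk with rfl | rfl
  · exact mem_union_left _ ((H.tree k).root_mem_pathVerts hcl.mem_verts_left)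
  · exact mem_union_right _ ((H.tree k).root_mem_pathVerts hcl.symm.mem_verts_left)

theorem notMem_Fix_of_root (hcl : H.IsCommonLeaf i j ℓ) {S : Finset (V × Bool)}
    (hS : AssignsExactly univ S) {k : Fin H.m} (hk : k = i ∨ k = j)
    (hkℓ : (H.tree k).root ≠ ℓ) (hroot : litValue S (H.tree k).root = true) : ℓ ∉ H.Fix S := by
  rintro ⟨a, b, hab, -, hfalse⟩
  have hne := hab.1
  have ha := hcl.eq_or_eq hab.mem_verts_left
  have hb := hcl.eq_or_eq hab.symm.mem_verts_left
  have hk' : k = a ∨ k = b := by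
    rcases ha with rfl | rfl <;> rcases hb with rfl | rfl <;> tauto
  have := (mem_iff_litValue_eq hS _ _).1 (hfalse _ (root_mem_clauseVerts hab hk') hkℓ)
  rw [hroot] at this
  exact Bool.noConfusion this

theorem respects_of_mem_lift (hcl : H.IsCommonLeaf i j ℓ) {S : Finset (V × Bool)}
    (hS : AssignsExactly univ S) {A : V → Bool} (hA : A ∈ H.lift S)
    (hR : H.RespectEvent i j ℓ A) : H.Respects i j S := by
  obtain ⟨hI, hSib, hℓ⟩ := hR
  have hmem_interior : ∀ v ∈ H.clauseVerts i j ℓ, v ≠ (H.tree i).root →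
      v ≠ (H.tree j).root → v ≠ ℓ → v ∈ H.interior i j ℓ := fun v hv hi hj hvℓ =>
    mem_sdiff.2 ⟨hv, by simp [hi, hj, hvℓ]⟩
  refine ⟨ℓ, hcl, fun v hv hi hj => ?_, fun v hv hi hj hvℓ w hw => ?_⟩
  · rw [mem_iff_litValue_eq hS]
    by_cases hvℓ : v = ℓ
    · subst hvℓ
      obtain ⟨hAℓ, hroot⟩ := hℓ hi hj
      have hnotFix : v ∉ H.Fix S := by
        rcases hroot with hroot | hroot
        · exact notMem_Fix_of_root hcl hS (Or.inl rfl) (Ne.symm hi)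
            (litValue_eq_true_of_mem_lift hA hroot)
        · exact notMem_Fix_of_root hcl hS (Or.inr rfl) (Ne.symm hj)
            (litValue_eq_true_of_mem_lift hA hroot)
      rw [← apply_eq_litValue_of_mem_lift hA hnotFix, hAℓ]
    · have hvI := hmem_interior v hv hi hj hvℓ
      obtain ⟨k, -, -, hvk⟩ := nonLeafIn_of_mem_interior hcl hvI
      rw [← apply_eq_litValue_of_mem_lift hA (hvk.notMem_Fix S), hI v hvI]
  · have hwS := mem_siblings.2 ⟨v, hmem_interior v hv hi hj hvℓ, hw⟩
    obtain ⟨k, -, hwk, -⟩ := nonLeafIn_of_mem_siblings hcl hwS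
    rw [mem_iff_litValue_eq hS, ← apply_eq_litValue_of_mem_lift hA (hwk.notMem_Fix S),
      hSib w hwS]

theorem Pr_card_filter_respects_lt_mul_rpow_le {L : ℝ} (hL : 0 ≤ L)
    (hheight : ∀ k, ((H.tree k).height : ℝ) ≤ L + 3) {M : Finset (Fin H.m × Fin H.m)}
    (hM : H.IsPseudomatching M) {q t : ℝ} (hq₀ : 0 < q) (hq₁ : q ≤ 1) :
    H.Pr (fun S => (#{e ∈ M | H.Respects e.1 e.2 S} : ℝ) < t) * q ^ t ≤
      Real.exp (-((1 - q) * (3 * (2 : ℝ) ^ (-(4 * L + 7))) * #M)) := by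
  choose ℓ hℓ using fun e : Fin H.m × Fin H.m => show ∃ ℓ, e ∈ M → H.IsCommonLeaf e.1 e.2 ℓ from
    if he : e ∈ M then (hM.1 e he).2.imp fun _ h _ => h
    else ⟨(H.tree e.1).root, fun h => absurd h he⟩
  have hD : (M : Set (Fin H.m × Fin H.m)).PairwiseDisjoint
      fun e => H.eventSupport e.1 e.2 (ℓ e) := fun e he f hf hef => by
    obtain ⟨h₁, h₂, h₃, h₄⟩ := hM.2 e he f hf hef
    exact disjoint_eventSupport (hℓ e he) (hℓ f hf) h₁ h₂ h₃ h₄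
  have htail := card_filter_card_lt_mul_rpow_le M _ hD _ (fun _ _ _ _ hAB hR => hR.congr hAB)
    (fun e he => mul_two_pow_le_card_respectEvent (hℓ e he) hL (hheight _) (hheight _))
    (t := t) hq₀ hq₁
  calc H.Pr _ * q ^ t
      ≤ #{A | (#{e ∈ M | H.RespectEvent e.1 e.2 (ℓ e) A} : ℝ) < t} / 2 ^ Fintype.card V *
          q ^ t := by
        refine mul_le_mul_of_nonneg_right (H.Pr_le_card_div fun S hS hE A hA => ?_)
          (Real.rpow_nonneg hq₀.le t)
        refine lt_of_le_of_lt ?_ hE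
        exact_mod_cast card_le_card (monotone_filter_right _ fun e he hR =>
          respects_of_mem_lift (hℓ e he) (mem_filter.1 hS).2.1 hA hR)
    _ ≤ _ := by
        rw [div_mul_eq_mul_div, div_le_iff₀ (by positivity)]
        linarith

end BTB

theorem three_mul_two_rpow_eq {m : ℝ} (hm : 0 < m) :
    3 * (2 : ℝ) ^ (-(4 * (Real.logb 2 m / 4.9) + 7)) =
      100 * (3 / 12800 * m ^ (-(4 / 4.9) : ℝ)) := by
  have hm' : (2 : ℝ) ^ (Real.logb 2 m * (-(4 / 4.9))) = m ^ (-(4 / 4.9) : ℝ) := by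
    rw [Real.rpow_mul zero_le_two, Real.rpow_logb two_pos (by norm_num) hm]
  have h7 : (2 : ℝ) ^ (-7 : ℝ) = 1 / 128 := by
    rw [Real.rpow_neg zero_le_two]
    norm_num
  rw [show -(4 * (Real.logb 2 m / 4.9) + 7) = Real.logb 2 m * (-(4 / 4.9)) + (-7 : ℝ) by ring,
    Real.rpow_add two_pos, hm', h7]
  ring

/-- `100 e⁻⁹⁹ ≤ 0.4¹⁰⁰`, since `e ≥ 2.718`. -/
theorem exp_neg_mul_div_rpow_le {t : ℝ} (ht : 0 ≤ t) :
    Real.exp (-(99 * t)) / (1 / 100) ^ t ≤ (0.4 : ℝ) ^ (100 * t) := by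
  have hbase : 100 * Real.exp (-99) ≤ (0.4 : ℝ) ^ (100 : ℝ) := by
    have he : (2.718 : ℝ) ^ 99 ≤ Real.exp 99 := by
      rw [show (99 : ℝ) = (99 : ℕ) * 1 by norm_num, Real.exp_nat_mul]
      exact pow_le_pow_left₀ (by norm_num) (by linarith [Real.exp_one_gt_d9]) 99
    rw [Real.exp_neg, ← div_eq_mul_inv, div_le_iff₀ (Real.exp_pos 99),
      show (100 : ℝ) = (100 : ℕ) by norm_num, Real.rpow_natCast]
    calc (100 : ℝ) ≤ 0.4 ^ 100 * 2.718 ^ 99 := by norm_num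
      _ ≤ 0.4 ^ 100 * Real.exp 99 := by gcongr
  calc Real.exp (-(99 * t)) / (1 / 100) ^ t = (100 * Real.exp (-99)) ^ t := by
        rw [Real.mul_rpow (by norm_num) (Real.exp_pos _).le, ← Real.exp_mul, one_div,
          Real.inv_rpow (by norm_num), div_inv_eq_mul, mul_comm, neg_mul]
    _ ≤ ((0.4 : ℝ) ^ (100 : ℝ)) ^ t := by gcongr
    _ = (0.4 : ℝ) ^ (100 * t) := (Real.rpow_mul (by norm_num) _ _).symm

/-- Chernoff-type bound: for `η = (3/12800)·m^(−4/4.9)`, the probability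
that fewer than `η·|M|` pseudoedges of `M` are respected is at most `0.4^(100·η·|M|)`. -/
theorem statement_17 (V : Type) [DecidableEq V] [Fintype V] (H : BTB V)
    (hH : H.IsPseudoexpander) (M : Finset (Fin H.m × Fin H.m))
    (hM : H.IsPseudomatching M) :
    H.Pr (fun S => ((M.filter (fun e => H.Respects e.1 e.2 S)).card : ℝ) <
        (3 / 12800 : ℝ) * (H.m : ℝ) ^ (-(4 / 4.9) : ℝ) * M.card) ≤
      (0.4 : ℝ) ^ (100 * ((3 / 12800 : ℝ) * (H.m : ℝ) ^ (-(4 / 4.9) : ℝ)) * M.card) := by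
  generalize hη : (3 / 12800 : ℝ) * (H.m : ℝ) ^ (-(4 / 4.9) : ℝ) = η
  obtain rfl | ⟨e, -⟩ := M.eq_empty_or_nonempty
  · simp [BTB.Pr]
  have hm : (1 : ℝ) ≤ H.m := by exact_mod_cast Fin.pos e.1
  have hL : 0 ≤ Real.logb 2 H.m / 4.9 :=
    div_nonneg (Real.logb_nonneg one_lt_two hm) (by norm_num)
  have htail := H.Pr_card_filter_respects_lt_mul_rpow_le hL hH.1 hM (t := η * #M)
    (q := 1 / 100) (by norm_num) (by norm_num)
  rw [three_mul_two_rpow_eq (by linarith), hη,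
    show (1 - 1 / 100) * (100 * η) * #M = 99 * (η * #M) by ring] at htail
  calc H.Pr _ ≤ Real.exp (-(99 * (η * #M))) / (1 / 100) ^ (η * #M) := by
        rwa [le_div_iff₀ (by positivity)]
    _ ≤ (0.4 : ℝ) ^ (100 * η * #M) := by
        rw [mul_assoc]
        exact exp_neg_mul_div_rpow_le (by rw [← hη]; positivity)

end NBPPaper
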